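/- Single-source domain adaptation bound: for any hypothesis h ∈ H and any source distribution D' and target distribution D over X × Y with 0-1 loss, L_D(h) ≤ L_{D'}(h) + (1/2)·d_{H∆H}(D', D) + λ, where λ = inf_{h'∈H} (L_{D'}(h') + L_D(h')) and d_{H∆H} is the H∆H-divergence between the marginals of D' and D on X. -/

import Mathlib

open MeasureTheory

noncomputable def disag {X Y : Type*} [MeasurableSpace X] (D : Measure X) (h h' : X → Y) : ℝ :=
  (D {x | h x ≠ h' x}).toReal

noncomputable def HdH {X Y : Type*} [MeasurableSpace X] (H : Set (X → Y)) (D' D : Measure X) : ℝ :=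
  2 * sSup {r : ℝ | ∃ h ∈ H, ∃ h' ∈ H, r = |disag D' h h' - disag D h h'|}

/-- 0-1 risk of a binary classifier `h` under a distribution on `X × Bool`. -/
noncomputable def risk01 {X : Type*} [MeasurableSpace X]
    (D : Measure (X × Bool)) (h : X → Bool) : ℝ :=
  (D {p | h p.1 ≠ p.2}).toReal

/-! For every `h' ∈ H`, the triangle inequality of the 0-1 loss through `h'` gives
`L_D(h) ≤ L_D(h') + D(h ≠ h')`; moving the disagreement `D(h ≠ h')` from the target to the source
marginal costs at most `½ d_{H∆H}`; and `D'(h ≠ h') ≤ L_{D'}(h) + L_{D'}(h')` by the triangle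
inequality again. Hence `L_D(h) - L_{D'}(h) - ½ d_{H∆H}` is a lower bound for every
`L_{D'}(h') + L_D(h')`, so also for their infimum. -/

lemma measureReal_le_add_of_subset_union {α : Type*} [MeasurableSpace α] {μ : Measure α}
    [IsFiniteMeasure μ] {s t u : Set α} (hs : s ⊆ t ∪ u) : μ.real s ≤ μ.real t + μ.real u :=
  (measureReal_mono hs).trans (measureReal_union_le t u)

lemma disag_map_fst {X Z Y : Type*} [MeasurableSpace X] [MeasurableSpace Z] [MeasurableSpace Y]
    [MeasurableEq Y] (μ : Measure (X × Z)) {h h' : X → Y} (hm : Measurable h)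
    (hm' : Measurable h') :
    disag (μ.map Prod.fst) h h' = μ.real {p | h p.1 ≠ h' p.1} := by
  have hs : MeasurableSet {x | h x ≠ h' x} := (measurableSet_eq_fun hm hm').compl
  rw [disag, Measure.map_apply measurable_fst hs]
  rfl

section ZeroOneLoss

variable {X : Type*} [MeasurableSpace X] (D : Measure (X × Bool)) [IsFiniteMeasure D]
  {h h' : X → Bool}

lemma risk01_le_risk01_add_disag (hm : Measurable h) (hm' : Measurable h') :
    risk01 D h ≤ risk01 D h' + disag (D.map Prod.fst) h h' := by
  rw [disag_map_fst D hm hm']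
  refine measureReal_le_add_of_subset_union ?_
  rintro ⟨x, b⟩ (hx : h x ≠ b)
  by_cases hb : h' x = b
  · exact Or.inr fun he => hx (he.trans hb)
  · exact Or.inl hb

lemma disag_map_fst_le_risk01_add_risk01 (hm : Measurable h) (hm' : Measurable h') :
    disag (D.map Prod.fst) h h' ≤ risk01 D h + risk01 D h' := by
  rw [disag_map_fst D hm hm']
  refine measureReal_le_add_of_subset_union ?_
  rintro ⟨x, b⟩ (hx : h x ≠ h' x)
  by_cases hb : h x = b
  · exact Or.inr fun he => hx (hb.trans he.symm)
  · exact Or.inl hb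

end ZeroOneLoss

lemma disag_le_disag_add_half_HdH {X Y : Type*} [MeasurableSpace X] {H : Set (X → Y)}
    {P Q : Measure X}
    (hbdd : BddAbove {r : ℝ | ∃ h ∈ H, ∃ h' ∈ H, r = |disag P h h' - disag Q h h'|})
    {h h' : X → Y} (hh : h ∈ H) (hh' : h' ∈ H) :
    disag Q h h' ≤ disag P h h' + 1 / 2 * HdH H P Q := by
  have hsup := le_csSup hbdd ⟨h, hh, h', hh', rfl⟩
  rw [HdH]
  linarith [neg_le_abs (disag P h h' - disag Q h h')]

theorem single_source_domain_adaptation_general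
    {X : Type*} [MeasurableSpace X]
    (H : Set (X → Bool)) (hmeas : ∀ h ∈ H, Measurable h)
    (D' D : Measure (X × Bool)) [IsProbabilityMeasure D'] [IsProbabilityMeasure D]
    (hbdd : BddAbove {r : ℝ | ∃ h ∈ H, ∃ h' ∈ H,
      r = |disag (D'.map Prod.fst) h h' - disag (D.map Prod.fst) h h'|})
    (h : X → Bool) (hh : h ∈ H) :
    risk01 D h ≤ risk01 D' h + (1 / 2 : ℝ) * HdH H (D'.map Prod.fst) (D.map Prod.fst)
      + sInf {r : ℝ | ∃ h' ∈ H, r = risk01 D' h' + risk01 D h'} := by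
  rw [← sub_le_iff_le_add']
  refine le_csInf ⟨_, h, hh, rfl⟩ ?_
  rintro _ ⟨h', hh', rfl⟩
  have hm := hmeas h hh
  have hm' := hmeas h' hh'
  linarith [risk01_le_risk01_add_disag D hm hm', disag_le_disag_add_half_HdH hbdd hh hh',
    disag_map_fst_le_risk01_add_risk01 D' hm hm']

/-- Single-source domain adaptation bound (Ben-David et al.; Lemma 1 of the paper):
`L_D(h) ≤ L_{D'}(h) + (1/2)·d_{H∆H}(D', D) + λ`. -/
theorem single_source_domain_adaptation
    {X : Type*} [MeasurableSpace X]
    (H : Set (X → Bool)) (hne : H.Nonempty) (hmeas : ∀ h ∈ H, Measurable h)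
    (D' D : Measure (X × Bool)) [IsProbabilityMeasure D'] [IsProbabilityMeasure D]
    (hbdd : BddAbove {r : ℝ | ∃ h ∈ H, ∃ h' ∈ H,
      r = |disag (D'.map Prod.fst) h h' - disag (D.map Prod.fst) h h'|})
    (h : X → Bool) (hh : h ∈ H) :
    risk01 D h ≤ risk01 D' h + (1 / 2 : ℝ) * HdH H (D'.map Prod.fst) (D.map Prod.fst)
      + sInf {r : ℝ | ∃ h' ∈ H, r = risk01 D' h' + risk01 D h'} :=
  single_source_domain_adaptation_general H hmeas D' D hbdd h hh
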